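/- If a string v of length at least 2|u| occurs at two positions i < j in a string s with j - i ≤ |u| ≤ |v|/2, then all occurrences of v in s starting in the interval [i, i + |u|] form an arithmetic progression with common difference equal to the shortest period of v. -/

import Mathlib

/-- `p` is a period of the string (list) `w`. -/
def IsPeriod {α : Type*} (w : List α) (p : ℕ) : Prop :=
  1 ≤ p ∧ ∀ i, i + p < w.length → w[i]? = w[i + p]?

/-- `v` occurs in `s` at (0-indexed) position `i`. -/
def OccursAt {α : Type*} (v s : List α) (i : ℕ) : Prop :=
  (s.drop i).take v.length = v

/-!
Two overlapping occurrences of `v` at distance `t` make `t` a period of `v`. If `p < t` are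
periods with `p + t ≤ |v|`, then so is `t - p`; for `2t ≤ |v|`, subtracting the shortest period
`p` repeatedly therefore shows `p ∣ t`. Conversely, between two occurrences at `i` and `i + a·p`
(with `a·p ≤ |v|`) every `i + a'·p` is an occurrence: each of its letters lies inside one of the
two occurrences, at an index shifted by a multiple of `p`.
-/

section

variable {α : Type*} {s v : List α}

theorem occursAt_iff_getElem? {k : ℕ} :
    OccursAt v s k ↔ ∀ m < v.length, s[k + m]? = v[m]? := by
  refine ⟨fun h m hm => ?_, fun h => List.ext_getElem? fun m => ?_⟩
  · rw [← h, List.getElem?_take_of_lt hm, List.getElem?_drop]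
  · by_cases hm : m < v.length
    · rw [List.getElem?_take_of_lt hm, List.getElem?_drop, h m hm]
    · rw [List.getElem?_eq_none_iff.2, List.getElem?_eq_none_iff.2 (by omega)]
      simp only [List.length_take]
      omega

namespace IsPeriod

variable {p t : ℕ}

theorem getElem?_add_mul (hp : IsPeriod v p) {m : ℕ} :
    ∀ {n : ℕ}, m + n * p < v.length → v[m + n * p]? = v[m]?
  | 0, _ => by simp
  | n + 1, h => by
    rw [show m + (n + 1) * p = m + n * p + p by ring] at h ⊢
    rw [← hp.2 _ h, getElem?_add_mul hp (by omega)]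

theorem sub (hp : IsPeriod v p) (ht : IsPeriod v t) (hpt : p < t) (hlen : p + t ≤ v.length) :
    IsPeriod v (t - p) := by
  refine ⟨by omega, fun m hm => ?_⟩
  by_cases hm' : m + t < v.length
  · have hpm := hp.2 (m + (t - p)) (by omega)
    rw [show m + (t - p) + p = m + t by omega] at hpm
    rw [ht.2 m hm', hpm]
  · -- here `m ≥ p`, so step back by `p` and forward by `t`
    have hpm := hp.2 (m - p) (by omega)
    have htm := ht.2 (m - p) (by omega)
    rw [Nat.sub_add_cancel (by omega)] at hpm
    rw [show m - p + t = m + (t - p) by omega] at htm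
    rw [← hpm, htm]

theorem dvd_of_minimal (hp : IsPeriod v p) (hmin : ∀ q, IsPeriod v q → p ≤ q)
    (ht : IsPeriod v t) (hlen : 2 * t ≤ v.length) : p ∣ t := by
  induction t using Nat.strong_induction_on with
  | _ t ih =>
    rcases (hmin t ht).eq_or_lt with rfl | hpt
    · exact dvd_rfl
    · have hsub := ih (t - p) (by have := hp.1; omega) (hp.sub ht hpt (by omega)) (by omega)
      simpa [Nat.sub_add_cancel hpt.le] using Nat.dvd_add hsub (dvd_refl p)

end IsPeriod

theorem isPeriod_sub_of_occursAt {i k : ℕ} (hi : OccursAt v s i) (hk : OccursAt v s k)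
    (hik : i < k) : IsPeriod v (k - i) := by
  refine ⟨by omega, fun m hm => ?_⟩
  rw [← occursAt_iff_getElem?.1 hk m (by omega), ← occursAt_iff_getElem?.1 hi _ hm]
  congr 1
  omega

theorem occursAt_add_mul_of_le {p i a a' : ℕ} (hp : IsPeriod v p) (hi : OccursAt v s i)
    (ha : OccursAt v s (i + a * p)) (hap : a * p ≤ v.length) (ha' : a' ≤ a) :
    OccursAt v s (i + a' * p) := by
  have hsplit : (a - a') * p + a' * p = a * p := by rw [← Nat.add_mul, Nat.sub_add_cancel ha']
  refine occursAt_iff_getElem?.2 fun m hm => ?_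
  by_cases hm' : m + a' * p < v.length
  · rw [← hp.getElem?_add_mul hm', ← occursAt_iff_getElem?.1 hi _ hm']
    congr 1
    omega
  · have hshift : m - (a - a') * p + (a - a') * p = m := Nat.sub_add_cancel (by omega)
    have h := hp.getElem?_add_mul (m := m - (a - a') * p) (n := a - a') (by omega)
    rw [hshift] at h
    rw [h, ← occursAt_iff_getElem?.1 ha _ (by omega)]
    congr 1
    omega

end

theorem occurrences_arithmetic_progression_general {α : Type*} (s v : List α) (i d p : ℕ)
    (hv : 2 * d ≤ v.length)
    (hoi : OccursAt v s i)
    (hp : IsPeriod v p) (hmin : ∀ q, IsPeriod v q → p ≤ q) :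
    (∀ k, i ≤ k → k ≤ i + d → OccursAt v s k → ∃ a : ℕ, k = i + a * p) ∧
    (∀ k, i ≤ k → k ≤ i + d → OccursAt v s k →
      ∀ k', i ≤ k' → k' ≤ k → (∃ a : ℕ, k' = i + a * p) → OccursAt v s k') := by
  have hprog : ∀ k, i ≤ k → k ≤ i + d → OccursAt v s k → ∃ a : ℕ, k = i + a * p := by
    intro k hik hkd hok
    rcases hik.eq_or_lt with rfl | hlt
    · exact ⟨0, by simp⟩
    obtain ⟨a, ha⟩ := hp.dvd_of_minimal hmin (isPeriod_sub_of_occursAt hoi hok hlt) (by omega)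
    exact ⟨a, by rw [mul_comm, ← ha]; omega⟩
  refine ⟨hprog, fun k hik hkd hok k' _ hk'k ⟨a', ha'⟩ => ?_⟩
  obtain ⟨a, rfl⟩ := hprog k hik hkd hok
  subst ha'
  exact occursAt_add_mul_of_le hp hoi hok (by omega) (Nat.le_of_mul_le_mul_right (by omega) hp.1)

/-- If `v` occurs in `s` at positions `i < j` with `j - i ≤ d` and `2d ≤ |v|`
(in the application `d = |u|` and `|v| ≥ 2|u|`), then the occurrences of `v` in `s`
starting in the interval `[i, i + d]` form an arithmetic progression whose common
difference is the shortest period `p` of `v`: every such occurrence is at a position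
`i + α·p`, and every earlier term `i + α'·p` of the progression is also an occurrence. -/
theorem occurrences_arithmetic_progression {α : Type*} (s v : List α) (i j d p : ℕ)
    (hij : i < j) (hd : j - i ≤ d) (hv : 2 * d ≤ v.length)
    (hoi : OccursAt v s i) (hoj : OccursAt v s j)
    (hp : IsPeriod v p) (hmin : ∀ q, IsPeriod v q → p ≤ q) :
    (∀ k, i ≤ k → k ≤ i + d → OccursAt v s k → ∃ a : ℕ, k = i + a * p) ∧
    (∀ k, i ≤ k → k ≤ i + d → OccursAt v s k →
      ∀ k', i ≤ k' → k' ≤ k → (∃ a : ℕ, k' = i + a * p) → OccursAt v s k') :=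
  occurrences_arithmetic_progression_general s v i d p hv hoi hp hmin
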